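/- Let n ≥ 2, 0 < σ < 2, λ ∈ ℝ, and let W ∈ C^{1,1}_loc(ℝⁿ) ∩ L_σ be anti-symmetric about T_λ (W(x^λ) = -W(x) for all x). Suppose W(y) ≥ 0 for all y ∈ Σ_λ and W is not identically 0 on Σ_λ. If x₀ ∈ Σ_λ satisfies W(x₀) = 0, then (-Δ)^{σ/2}W(x₀) < 0. -/

import Mathlib

/-!
Write `K(y) = |x₀ - y|^{-(n+σ)}`. For `ε ≤ λ - x₀₁` the set `{|y - x₀| ≥ ε}` contains the
complement of `Σ_λ`, the mirror image of `{y₁ ≤ λ}`. Reflecting that part, and using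
`W(y^λ) = -W(y)` and `W = 0` on `T_λ`, gives
`∫_{|y-x₀|≥ε} (W(x₀) - W(y)) K(y) dy
  = -∫_{Σ_λ, |y-x₀|≥ε} W(y) (K(y) - K(y^λ)) dy + ∫_{Σ_λ ∩ B_ε(x₀)} W(y) K(y^λ) dy`.
As `|x₀ - y| < |x₀ - y^λ|` for `x₀, y ∈ Σ_λ`, the first integrand is nonnegative, and it is
positive on a ball where `W > 0`, so the first term is at most some `-δ < 0` for all small `ε`.
The second term tends to `0` by absolute continuity of the integral, hence the principal value is
at most `-C_{n,σ} δ`.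
-/

open MeasureTheory Filter Metric Set Bornology

noncomputable section

/-- The space `ℝⁿ`. -/
abbrev En (n : ℕ) := EuclideanSpace ℝ (Fin n)

/-- Membership in the weighted space `L_σ`. -/
def MemL (n : ℕ) (σ : ℝ) (w : En n → ℝ) : Prop :=
  LocallyIntegrable w volume ∧
    Integrable (fun x : En n => |w x| / (1 + ‖x‖ ^ ((n : ℝ) + σ))) volume

/-- `C^{1,1}_loc` on an open set `Ω`: near every point of `Ω`, `w` is
differentiable with Lipschitz-continuous derivative. -/
def C11locOn (n : ℕ) (Ω : Set (En n)) (w : En n → ℝ) : Prop :=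
  ∀ x ∈ Ω, ∃ ε > 0, ∃ K : NNReal, ball x ε ⊆ Ω ∧
    (∀ y ∈ ball x ε, DifferentiableAt ℝ w y) ∧
    LipschitzOnWith K (fderiv ℝ w) (ball x ε)

/-- `C^{1,1}_loc` on all of `ℝⁿ`. -/
def C11loc (n : ℕ) (w : En n → ℝ) : Prop := C11locOn n univ w

/-- `HasFracLap n σ c w x L` : the fractional Laplacian `(-Δ)^{σ/2} w`, with
normalization constant `c = C_{n,σ} > 0`, exists at `x` as a principal value
and is equal to `L`. -/
def HasFracLap (n : ℕ) (σ c : ℝ) (w : En n → ℝ) (x : En n) (L : ℝ) : Prop :=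
  Tendsto
    (fun ε : ℝ => c * ∫ y in {y : En n | ε ≤ dist x y},
        (w x - w y) / dist x y ^ ((n : ℝ) + σ))
    (nhdsWithin 0 (Ioi 0)) (nhds L)

/-- Reflection `x ↦ x^λ` about the hyperplane `T_λ = {x : x₁ = λ}`. -/
def reflPt (n : ℕ) [NeZero n] (l : ℝ) (x : En n) : En n :=
  WithLp.toLp 2 (fun i => if i = 0 then 2 * l - x 0 else x i)

/-- The half space `Σ_λ = {x : x₁ < λ}`. -/
def halfSpace (n : ℕ) [NeZero n] (l : ℝ) : Set (En n) := {x | x 0 < l}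

open Topology

lemma one_add_norm_rpow_le_mul_dist_rpow {E : Type*} [SeminormedAddCommGroup E] {p ε : ℝ}
    (hp : 0 ≤ p) (hε : 0 < ε) {x y : E} (h : ε ≤ dist x y) :
    1 + ‖y‖ ^ p ≤ (ε ^ (-p) + (‖x‖ / ε + 1) ^ p) * dist x y ^ p := by
  have hd : 0 < dist x y := hε.trans_le h
  have hone : 1 ≤ ε ^ (-p) * dist x y ^ p := by
    rw [Real.rpow_neg hε.le, ← div_eq_inv_mul, one_le_div (by positivity)]
    exact Real.rpow_le_rpow hε.le h hp
  have hnorm : ‖y‖ ≤ (‖x‖ / ε + 1) * dist x y := by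
    have h1 : ‖y‖ ≤ ‖x‖ + dist x y := by
      simpa [dist_eq_norm, norm_sub_rev] using norm_le_norm_add_norm_sub' y x
    have h2 : ‖x‖ ≤ ‖x‖ / ε * dist x y := by
      rw [div_mul_eq_mul_div, le_div_iff₀ hε]
      exact mul_le_mul_of_nonneg_left h (norm_nonneg x)
    linarith
  have hpow : ‖y‖ ^ p ≤ (‖x‖ / ε + 1) ^ p * dist x y ^ p := by
    rw [← Real.mul_rpow (by positivity) hd.le]
    exact Real.rpow_le_rpow (norm_nonneg y) hnorm hp
  linarith

lemma measurableSet_le_dist {α : Type*} [PseudoMetricSpace α] [MeasurableSpace α]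
    [OpensMeasurableSpace α] (x : α) (ε : ℝ) : MeasurableSet {y | ε ≤ dist x y} :=
  (isClosed_le continuous_const (continuous_const.dist continuous_id)).measurableSet

lemma integrableOn_div_dist_rpow {E : Type*} [NormedAddCommGroup E] [MeasurableSpace E]
    [OpensMeasurableSpace E] {μ : Measure E} {w : E → ℝ} {p ε : ℝ} (hp : 0 ≤ p) (hε : 0 < ε)
    (hw : AEStronglyMeasurable w μ) (hwi : Integrable (fun y => |w y| / (1 + ‖y‖ ^ p)) μ)
    (x : E) : IntegrableOn (fun y => w y / dist x y ^ p) {y | ε ≤ dist x y} μ := by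
  refine Integrable.mono' (hwi.const_mul (ε ^ (-p) + (‖x‖ / ε + 1) ^ p)).integrableOn
    (hw.div₀ (by fun_prop : Continuous fun y => dist x y ^ p).aestronglyMeasurable).restrict ?_
  filter_upwards [ae_restrict_mem (measurableSet_le_dist x ε)] with y hy
  have hd : 0 < dist x y ^ p := Real.rpow_pos_of_pos (hε.trans_le hy) p
  have hy1 : 0 < 1 + ‖y‖ ^ p := by positivity
  rw [Real.norm_eq_abs, abs_div, abs_of_pos hd, div_le_iff₀ hd, mul_div_assoc', div_mul_eq_mul_div,
    le_div_iff₀ hy1]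
  nlinarith [mul_le_mul_of_nonneg_left (one_add_norm_rpow_le_mul_dist_rpow hp hε hy)
    (abs_nonneg (w y))]

lemma tendsto_setIntegral_ball_inter_nhdsGT_zero {α : Type*} [MetricSpace α] [MeasurableSpace α]
    [OpensMeasurableSpace α] [ProperSpace α] {μ : Measure α} [IsFiniteMeasureOnCompacts μ]
    [NullSingletonClass μ] {g : α → ℝ} {s : Set α} (hg : IntegrableOn g s μ) (x : α) :
    Tendsto (fun ε => ∫ y in ball x ε ∩ s, g y ∂μ) (𝓝[>] 0) (𝓝 0) := by
  have hball : Tendsto (fun ε => μ (ball x ε)) (𝓝[>] 0) (𝓝 0) := by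
    simpa [thickening_singleton] using
      tendsto_measure_thickening_of_isClosed (μ := μ) (s := {x})
        ⟨1, one_pos, by simpa [thickening_singleton] using measure_ball_lt_top.ne⟩
        isClosed_singleton
  have hball_s : Tendsto (fun ε => μ.restrict s (ball x ε)) (𝓝[>] 0) (𝓝 0) :=
    tendsto_of_tendsto_of_tendsto_of_le_of_le tendsto_const_nhds hball (fun _ => zero_le)
      fun _ => Measure.restrict_apply_le _ _
  simpa only [Measure.restrict_restrict measurableSet_ball] using
    hg.tendsto_setIntegral_nhds_zero hball_s

lemma C11loc.continuous {n : ℕ} {W : En n → ℝ} (hW : C11loc n W) : Continuous W :=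
  continuous_iff_continuousAt.2 fun x => by
    obtain ⟨ε, hε, -, -, hdiff, -⟩ := hW x (mem_univ x)
    exact (hdiff x (mem_ball_self hε)).continuousAt

section Reflection

variable {n : ℕ} [NeZero n] {lam : ℝ}

@[simp]
lemma reflPt_apply_zero (x : En n) : reflPt n lam x 0 = 2 * lam - x 0 := by
  simp [reflPt]

lemma reflPt_apply_of_ne (x : En n) {i : Fin n} (h : i ≠ 0) : reflPt n lam x i = x i := by
  simp [reflPt, h]

lemma reflPt_involutive : Function.Involutive (reflPt n lam) := by
  intro x
  ext i
  by_cases h : i = 0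
  · subst h; simp
  · simp [reflPt_apply_of_ne _ h]

lemma isometry_reflPt : Isometry (reflPt n lam) := by
  refine Isometry.of_dist_eq fun x y => ?_
  simp_rw [EuclideanSpace.dist_eq]
  congr 1
  refine Finset.sum_congr rfl fun i _ => ?_
  by_cases h : i = 0
  · subst h
    simp only [reflPt_apply_zero, Real.dist_eq]
    rw [abs_sub_comm]; ring_nf
  · rw [reflPt_apply_of_ne _ h, reflPt_apply_of_ne _ h]

def reflIsometryEquiv (l : ℝ) : En n ≃ᵢ En n where
  toEquiv := (reflPt_involutive (n := n) (lam := l)).toPerm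
  isometry_toFun := isometry_reflPt

lemma measurePreserving_reflPt : MeasurePreserving (reflPt n lam) volume volume := by
  have := (reflIsometryEquiv (n := n) lam).measurePreserving_euclideanHausdorffMeasure n
  rwa [EuclideanSpace.euclideanHausdorffMeasure_eq_volume] at this

lemma measurableEmbedding_reflPt : MeasurableEmbedding (reflPt n lam) :=
  (reflIsometryEquiv (n := n) lam).toHomeomorph.measurableEmbedding

lemma isOpen_halfSpace : IsOpen (halfSpace n lam) :=
  isOpen_lt (EuclideanSpace.proj (0 : Fin n)).continuous continuous_const

lemma reflPt_preimage_compl_halfSpace :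
    reflPt n lam ⁻¹' (halfSpace n lam)ᶜ = {z | z 0 ≤ lam} := by
  ext z
  simp only [mem_preimage, mem_compl_iff, halfSpace, mem_ofPred_eq, reflPt_apply_zero, not_lt]
  constructor <;> intro h <;> linarith

lemma sub_le_dist_of_notMem_halfSpace (x : En n) {y : En n} (hy : y ∉ halfSpace n lam) :
    lam - x 0 ≤ dist x y := by
  have h := PiLp.dist_apply_le x y 0
  simp only [halfSpace, mem_ofPred_eq, not_lt] at hy
  rw [Real.dist_eq] at h
  linarith [neg_abs_le (x 0 - y 0)]

lemma dist_reflPt_sq (x z : En n) :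
    dist x (reflPt n lam z) ^ 2 = dist x z ^ 2 + 4 * (lam - x 0) * (lam - z 0) := by
  have hrest : ∀ i ∈ ({0}ᶜ : Finset (Fin n)),
      dist (x i) (reflPt n lam z i) ^ 2 = dist (x i) (z i) ^ 2 := fun i hi => by
    rw [reflPt_apply_of_ne z (by simpa using hi)]
  simp_rw [EuclideanSpace.dist_eq, Real.sq_sqrt (Finset.sum_nonneg fun _ _ => sq_nonneg _),
    Fintype.sum_eq_add_sum_compl (0 : Fin n), Finset.sum_congr rfl hrest]
  simp only [reflPt_apply_zero, Real.dist_eq, sq_abs]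
  ring

lemma dist_lt_dist_reflPt {x z : En n} (hx : x ∈ halfSpace n lam) (hz : z ∈ halfSpace n lam) :
    dist x z < dist x (reflPt n lam z) := by
  have hgap : 0 < 4 * (lam - x 0) * (lam - z 0) := by
    have : 0 < lam - x 0 := sub_pos.2 hx
    have : 0 < lam - z 0 := sub_pos.2 hz
    positivity
  exact lt_of_pow_lt_pow_left₀ 2 dist_nonneg (by rw [dist_reflPt_sq]; linarith)

lemma setIntegral_compl_halfSpace (F : En n → ℝ) :
    ∫ y in (halfSpace n lam)ᶜ, F y = ∫ z in {z | z 0 ≤ lam}, F (reflPt n lam z) := by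
  rw [← reflPt_preimage_compl_halfSpace,
    measurePreserving_reflPt.setIntegral_preimage_emb measurableEmbedding_reflPt]

end Reflection

section Antisymmetric

variable {n : ℕ} [NeZero n] {lam : ℝ} {W : En n → ℝ}

lemma eq_zero_of_reflPt_eq_neg (hW : ∀ x, W (reflPt n lam x) = -W x) {z : En n}
    (hz : z 0 = lam) : W z = 0 := by
  have hfix : reflPt n lam z = z := by
    ext i
    by_cases h : i = 0
    · subst h; simp only [reflPt_apply_zero, hz]; ring
    · exact reflPt_apply_of_ne z h
  have := hW z
  rw [hfix] at this
  linarith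

lemma compl_halfSpace_subset_setOf_le_dist (x₀ : En n) {ε : ℝ} (hε : ε ≤ lam - x₀ 0) :
    (halfSpace n lam)ᶜ ⊆ {y | ε ≤ dist x₀ y} :=
  fun _ hy => hε.trans (sub_le_dist_of_notMem_halfSpace x₀ hy)

lemma integrableOn_div_dist_reflPt_rpow (hW : ∀ x, W (reflPt n lam x) = -W x) {x₀ : En n}
    {p : ℝ} (hf : IntegrableOn (fun y => W y / dist x₀ y ^ p) (halfSpace n lam)ᶜ) :
    IntegrableOn (fun z => W z / dist x₀ (reflPt n lam z) ^ p) (halfSpace n lam) := by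
  rw [← measurePreserving_reflPt.integrableOn_comp_preimage measurableEmbedding_reflPt,
    reflPt_preimage_compl_halfSpace] at hf
  refine IntegrableOn.mono_set (t := {z : En n | z 0 ≤ lam}) ?_ fun z (hz : z 0 < lam) => hz.le
  simpa [Function.comp_def, hW, neg_div] using hf.neg

lemma setIntegral_compl_halfSpace_div_dist_rpow (hW : ∀ x, W (reflPt n lam x) = -W x)
    (x₀ : En n) (p : ℝ) :
    ∫ y in (halfSpace n lam)ᶜ, W y / dist x₀ y ^ p =
      -∫ z in halfSpace n lam, W z / dist x₀ (reflPt n lam z) ^ p := by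
  rw [setIntegral_compl_halfSpace, ← integral_neg]
  simp_rw [hW, neg_div]
  refine setIntegral_eq_of_subset_of_forall_sdiff_eq_zero ?_ (fun z (hz : z 0 < lam) => hz.le) ?_
  · exact (isClosed_le (EuclideanSpace.proj (0 : Fin n)).continuous continuous_const).measurableSet
  · rintro z ⟨hz, hzH⟩
    simp [eq_zero_of_reflPt_eq_neg hW (le_antisymm hz (not_lt.1 hzH))]

lemma setIntegral_div_dist_rpow_eq (hW : ∀ x, W (reflPt n lam x) = -W x) {x₀ : En n} {p ε : ℝ}
    (hε : ε ≤ lam - x₀ 0)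
    (hf : IntegrableOn (fun y => W y / dist x₀ y ^ p) {y | ε ≤ dist x₀ y}) :
    ∫ y in {y | ε ≤ dist x₀ y}, W y / dist x₀ y ^ p =
      (∫ y in {y | ε ≤ dist x₀ y} ∩ halfSpace n lam,
          (W y / dist x₀ y ^ p - W y / dist x₀ (reflPt n lam y) ^ p)) -
        ∫ y in ball x₀ ε ∩ halfSpace n lam, W y / dist x₀ (reflPt n lam y) ^ p := by
  set S : Set (En n) := {y | ε ≤ dist x₀ y}
  have hg : IntegrableOn (fun y => W y / dist x₀ (reflPt n lam y) ^ p) (halfSpace n lam) :=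
    integrableOn_div_dist_reflPt_rpow hW
      (hf.mono_set (compl_halfSpace_subset_setOf_le_dist x₀ hε))
  have hS_diff : S \ halfSpace n lam = (halfSpace n lam)ᶜ := by
    rw [sdiff_eq_compl_inter, inter_eq_left.2 (compl_halfSpace_subset_setOf_le_dist x₀ hε)]
  have hH_diff : halfSpace n lam \ S = ball x₀ ε ∩ halfSpace n lam := by
    ext y
    simp [S, dist_comm, and_comm]
  rw [← integral_inter_add_sdiff isOpen_halfSpace.measurableSet hf, hS_diff,
    setIntegral_compl_halfSpace_div_dist_rpow hW,
    ← integral_inter_add_sdiff (measurableSet_le_dist x₀ ε) hg, hH_diff,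
    inter_comm (halfSpace n lam) S,
    integral_sub (hf.mono_set inter_subset_left) (hg.mono_set inter_subset_right)]
  ring

end Antisymmetric

section Positivity

variable {n : ℕ} [NeZero n] {lam p : ℝ}

lemma div_rpow_dist_reflPt_lt (hp : 0 < p) {x z : En n} (hx : x ∈ halfSpace n lam)
    (hz : z ∈ halfSpace n lam) (hzx : z ≠ x) {a : ℝ} (ha : 0 < a) :
    a / dist x (reflPt n lam z) ^ p < a / dist x z ^ p :=
  div_lt_div_of_pos_left ha (Real.rpow_pos_of_pos (dist_pos.2 hzx.symm) p)
    (Real.rpow_lt_rpow dist_nonneg (dist_lt_dist_reflPt hx hz) hp)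

lemma div_rpow_dist_reflPt_le (hp : 0 < p) {x z : En n} (hx : x ∈ halfSpace n lam)
    (hz : z ∈ halfSpace n lam) (hzx : z ≠ x) {a : ℝ} (ha : 0 ≤ a) :
    a / dist x (reflPt n lam z) ^ p ≤ a / dist x z ^ p := by
  rcases ha.lt_or_eq with ha | rfl
  · exact (div_rpow_dist_reflPt_lt hp hx hz hzx ha).le
  · simp

lemma exists_pos_le_setIntegral_sub_reflPt {W : En n → ℝ} (hp : 0 < p) (hWc : Continuous W)
    (hW_nonneg : ∀ y ∈ halfSpace n lam, 0 ≤ W y) (hW_ne : ∃ y ∈ halfSpace n lam, W y ≠ 0)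
    {x₀ : En n} (hx₀ : x₀ ∈ halfSpace n lam) (hzero : W x₀ = 0)
    (hf : ∀ ε > 0, IntegrableOn (fun y => W y / dist x₀ y ^ p) {y | ε ≤ dist x₀ y})
    (hg : IntegrableOn (fun y => W y / dist x₀ (reflPt n lam y) ^ p) (halfSpace n lam)) :
    ∃ δ > 0, ∃ ε₁ > 0, ∀ ε ∈ Ioc 0 ε₁, δ ≤ ∫ y in {y | ε ≤ dist x₀ y} ∩ halfSpace n lam,
      (W y / dist x₀ y ^ p - W y / dist x₀ (reflPt n lam y) ^ p) := by
  set h : En n → ℝ := fun y => W y / dist x₀ y ^ p - W y / dist x₀ (reflPt n lam y) ^ p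
  obtain ⟨z₀, hz₀, hWz₀⟩ := hW_ne
  obtain ⟨r, hr, hball⟩ := Metric.isOpen_iff.1
    (isOpen_halfSpace.inter (isOpen_lt continuous_const hWc)) z₀
    ⟨hz₀, (hW_nonneg z₀ hz₀).lt_of_ne' hWz₀⟩
  have hx₀_far : r ≤ dist x₀ z₀ := by
    by_contra! hlt
    have := (hball (mem_ball.2 hlt)).2
    simp [hzero] at this
  have hsub : ∀ ε ≤ r / 2, ball z₀ (r / 2) ⊆ {y | ε ≤ dist x₀ y} ∩ halfSpace n lam := by
    intro ε hε y hy
    refine ⟨show ε ≤ dist x₀ y from ?_, (hball (ball_subset_ball (by linarith) hy)).1⟩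
    linarith [dist_triangle x₀ y z₀, mem_ball.1 hy]
  have hh_nonneg : ∀ y ∈ halfSpace n lam, y ≠ x₀ → 0 ≤ h y := fun y hy hyx =>
    sub_nonneg.2 (div_rpow_dist_reflPt_le hp hx₀ hy hyx (hW_nonneg y hy))
  have hint : ∀ ε > 0, IntegrableOn h ({y | ε ≤ dist x₀ y} ∩ halfSpace n lam) := fun ε hε =>
    ((hf ε hε).mono_set inter_subset_left).sub (hg.mono_set inter_subset_right)
  refine ⟨∫ y in ball z₀ (r / 2), h y, ?_, r / 2, by positivity, fun ε ⟨hε, hεr⟩ => ?_⟩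
  · have hB := hsub (r / 2) le_rfl
    have hpos : ∀ y ∈ ball z₀ (r / 2), 0 < h y := fun y hy => by
      have hyx : y ≠ x₀ := by rintro rfl; linarith [mem_ball.1 hy]
      exact sub_pos.2 (div_rpow_dist_reflPt_lt hp hx₀ (hB hy).2 hyx
        (hball (ball_subset_ball (by linarith) hy)).2)
    rw [gt_iff_lt,
      setIntegral_pos_iff_support_of_nonneg_ae ?_ ((hint (r / 2) (by positivity)).mono_set hB),
      inter_eq_right.2 fun y hy => Function.mem_support.2 (hpos y hy).ne']
    · exact measure_ball_pos _ _ (by positivity)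
    · filter_upwards [ae_restrict_mem measurableSet_ball] with y hy using (hpos y hy).le
  · refine setIntegral_mono_set (hint ε hε) ?_ (hsub ε hεr).eventuallyLE
    filter_upwards [ae_restrict_mem ((measurableSet_le_dist x₀ ε).inter
      isOpen_halfSpace.measurableSet)] with y ⟨hyS, hyH⟩
    refine hh_nonneg y hyH fun hyx => ?_
    subst hyx
    simp only [mem_ofPred_eq, dist_self] at hyS
    linarith

end Positivity

theorem statement10_general
    (n : ℕ) [NeZero n]
    (σ : ℝ) (hσ : 0 < σ ∧ σ < 2) (lam : ℝ)
    (cns : ℝ) (hcns : 0 < cns)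
    (W : En n → ℝ) (hW_reg : C11loc n W) (hW_L : MemL n σ W)
    (hW_anti : ∀ x, W (reflPt n lam x) = -W x)
    (hW_nonneg : ∀ y ∈ halfSpace n lam, 0 ≤ W y)
    (hW_ne : ∃ y ∈ halfSpace n lam, W y ≠ 0)
    (x₀ : En n) (hx₀ : x₀ ∈ halfSpace n lam) (hzero : W x₀ = 0) :
    ∀ L, HasFracLap n σ cns W x₀ L → L < 0 := by
  intro L hL
  have hp : 0 < (n : ℝ) + σ := by have := hσ.1; positivity
  have hd₀ : 0 < lam - x₀ 0 := sub_pos.2 hx₀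
  have hf : ∀ ε > 0,
      IntegrableOn (fun y => W y / dist x₀ y ^ ((n : ℝ) + σ)) {y | ε ≤ dist x₀ y} :=
    fun ε hε => integrableOn_div_dist_rpow hp.le hε hW_L.1.aestronglyMeasurable hW_L.2 x₀
  have hg : IntegrableOn (fun y => W y / dist x₀ (reflPt n lam y) ^ ((n : ℝ) + σ))
      (halfSpace n lam) :=
    integrableOn_div_dist_reflPt_rpow hW_anti
      ((hf _ hd₀).mono_set (compl_halfSpace_subset_setOf_le_dist x₀ le_rfl))
  obtain ⟨δ, hδ, ε₁, hε₁, hgap⟩ := exists_pos_le_setIntegral_sub_reflPt hp hW_reg.continuous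
    hW_nonneg hW_ne hx₀ hzero hf hg
  have hbound : ∀ᶠ ε in 𝓝[>] 0,
      cns * ∫ y in {y | ε ≤ dist x₀ y}, (W x₀ - W y) / dist x₀ y ^ ((n : ℝ) + σ) ≤
        cns * (-δ + ∫ y in ball x₀ ε ∩ halfSpace n lam,
          W y / dist x₀ (reflPt n lam y) ^ ((n : ℝ) + σ)) := by
    filter_upwards [Ioc_mem_nhdsGT (lt_min hε₁ hd₀)] with ε ⟨hε, hεle⟩
    gcongr
    simp_rw [hzero, zero_sub, neg_div]
    rw [integral_neg, setIntegral_div_dist_rpow_eq hW_anti (hεle.trans (min_le_right _ _))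
      (hf ε hε)]
    linarith [hgap ε ⟨hε, hεle.trans (min_le_left _ _)⟩]
  have hlim := ((tendsto_setIntegral_ball_inter_nhdsGT_zero hg x₀).const_add (-δ)).const_mul cns
  have hL_le := le_of_tendsto_of_tendsto hL hlim hbound
  linarith [mul_pos hcns hδ]

/-- strong maximum principle for anti-symmetric functions:
if `W ≥ 0` on `Σ_λ`, `W ≢ 0` on `Σ_λ`, and `W(x₀) = 0` at some `x₀ ∈ Σ_λ`,
then `(-Δ)^{σ/2} W(x₀) < 0`. -/
theorem statement10
    (n : ℕ) [NeZero n] (hn : 2 ≤ n)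
    (σ : ℝ) (hσ : 0 < σ ∧ σ < 2) (lam : ℝ)
    (cns : ℝ) (hcns : 0 < cns)
    (W : En n → ℝ) (hW_reg : C11loc n W) (hW_L : MemL n σ W)
    (hW_anti : ∀ x, W (reflPt n lam x) = -W x)
    (hW_nonneg : ∀ y ∈ halfSpace n lam, 0 ≤ W y)
    (hW_ne : ∃ y ∈ halfSpace n lam, W y ≠ 0)
    (x₀ : En n) (hx₀ : x₀ ∈ halfSpace n lam) (hzero : W x₀ = 0) :
    ∀ L, HasFracLap n σ cns W x₀ L → L < 0 :=
  statement10_general n σ hσ lam cns hcns W hW_reg hW_L hW_anti hW_nonneg hW_ne x₀ hx₀ hzero
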